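/- Assume U is connected. Then at least one of the S_t¹×S_s¹-valued lightcone Gauss maps LG^+ or LG^− is a constant map if and only if there exist a nonzero lightlike vector n ∈ ℝ⁴₂ and c ∈ ℝ such that X(U) ⊆ LHP(n,c). Moreover, if LG^σ is constant with value v^σ (σ ∈ {+1,−1}), then the function p ↦ ⟨X(p), v^σ⟩ is a constant c^σ and X(U) ⊆ LHP(v^σ, c^σ); and conversely, if X(U) ⊆ LHP(n,c) for a nonzero lightlike n, then for every p ∈ U the vector n is a nonzero scalar multiple of (e₁+e₂)(p) or of (e₁−e₂)(p). -/

import Mathlib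

noncomputable section

def pprod (x y : Fin 4 → ℝ) : ℝ :=
  -(x 0 * y 0) - x 1 * y 1 + x 2 * y 2 + x 3 * y 3

def pdx (f : ℝ × ℝ → ℝ) (p : ℝ × ℝ) : ℝ := fderiv ℝ f p (1, 0)
def pdy (f : ℝ × ℝ → ℝ) (p : ℝ × ℝ) : ℝ := fderiv ℝ f p (0, 1)

def Dx (X : ℝ × ℝ → Fin 4 → ℝ) (p : ℝ × ℝ) : Fin 4 → ℝ := fderiv ℝ X p (1, 0)
def Dy (X : ℝ × ℝ → Fin 4 → ℝ) (p : ℝ × ℝ) : Fin 4 → ℝ := fderiv ℝ X p (0, 1)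
def Dxx (X : ℝ × ℝ → Fin 4 → ℝ) (p : ℝ × ℝ) : Fin 4 → ℝ := Dx (Dx X) p
def Dxy (X : ℝ × ℝ → Fin 4 → ℝ) (p : ℝ × ℝ) : Fin 4 → ℝ := Dy (Dx X) p
def Dyy (X : ℝ × ℝ → Fin 4 → ℝ) (p : ℝ × ℝ) : Fin 4 → ℝ := Dy (Dy X) p

def detHess (f : ℝ × ℝ → ℝ) (p : ℝ × ℝ) : ℝ :=
  pdx (pdx f) p * pdy (pdy f) p - (pdy (pdx f) p) ^ 2

def IsLorentzSurface (U : Set (ℝ × ℝ)) (X : ℝ × ℝ → Fin 4 → ℝ) : Prop :=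
  IsOpen U ∧ ContDiffOn ℝ (⊤ : ℕ∞) X U ∧
    ∀ p ∈ U,
      pprod (Dx X p) (Dx X p) * pprod (Dy X p) (Dy X p) - (pprod (Dx X p) (Dy X p)) ^ 2 < 0

def IsNormalFrame (U : Set (ℝ × ℝ)) (X e1 e2 : ℝ × ℝ → Fin 4 → ℝ) : Prop :=
  ContDiffOn ℝ (⊤ : ℕ∞) e1 U ∧ ContDiffOn ℝ (⊤ : ℕ∞) e2 U ∧
    ∀ p ∈ U,
      pprod (e1 p) (e1 p) = -1 ∧ pprod (e2 p) (e2 p) = 1 ∧ pprod (e1 p) (e2 p) = 0 ∧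
      pprod (e1 p) (Dx X p) = 0 ∧ pprod (e1 p) (Dy X p) = 0 ∧
      pprod (e2 p) (Dx X p) = 0 ∧ pprod (e2 p) (Dy X p) = 0

def xi (e1 e2 : ℝ × ℝ → Fin 4 → ℝ) (σ : ℝ) (p : ℝ × ℝ) : ℝ :=
  Real.sqrt ((e1 p 0 + σ * e2 p 0) ^ 2 + (e1 p 1 + σ * e2 p 1) ^ 2)

def LG (e1 e2 : ℝ × ℝ → Fin 4 → ℝ) (σ : ℝ) (p : ℝ × ℝ) : Fin 4 → ℝ :=
  (xi e1 e2 σ p)⁻¹ • (e1 p + σ • e2 p)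

def KlVanish (X e1 e2 : ℝ × ℝ → Fin 4 → ℝ) (σ : ℝ) (p : ℝ × ℝ) : Prop :=
  pprod (Dxx X p) (e1 p + σ • e2 p) * pprod (Dyy X p) (e1 p + σ • e2 p)
    - (pprod (Dxy X p) (e1 p + σ • e2 p)) ^ 2 = 0

open Matrix in
set_option maxHeartbeats 1000000 in
lemma span_lemma (T1 T2 E1 E2 : Fin 4 → ℝ)
    (hT : pprod T1 T1 * pprod T2 T2 - (pprod T1 T2)^2 < 0)
    (h11 : pprod E1 E1 = -1) (h22 : pprod E2 E2 = 1) (h12 : pprod E1 E2 = 0)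
    (h1x : pprod E1 T1 = 0) (h1y : pprod E1 T2 = 0)
    (h2x : pprod E2 T1 = 0) (h2y : pprod E2 T2 = 0)
    (m : Fin 4 → ℝ)
    (hm1 : pprod m T1 = 0) (hm2 : pprod m T2 = 0)
    (hm3 : pprod m E1 = 0) (hm4 : pprod m E2 = 0) : m = 0 := by
  set B : Matrix (Fin 4) (Fin 4) ℝ := Matrix.of ![T1, T2, E1, E2] with hB
  set D : Matrix (Fin 4) (Fin 4) ℝ := Matrix.diagonal ![-1, -1, 1, 1] with hD
  have hG : B * D * B.transpose =
      !![pprod T1 T1, pprod T1 T2, 0, 0; pprod T1 T2, pprod T2 T2, 0, 0;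
         0, 0, -1, 0; 0, 0, 0, 1] := by
    have h11' := h11; have h22' := h22; have h12' := h12
    have h1x' := h1x; have h1y' := h1y; have h2x' := h2x; have h2y' := h2y
    simp only [pprod] at h11' h22' h12' h1x' h1y' h2x' h2y'
    ext i j
    fin_cases i <;> fin_cases j <;>
      simp [hB, hD, pprod, Matrix.mul_apply, Matrix.transpose_apply, Matrix.diagonal_apply,
        Fin.sum_univ_four, Matrix.vecMul, dotProduct, Matrix.vecHead, Matrix.vecTail,
        Function.comp] <;>
      first
      | ring1
      | linear_combination h11' | linear_combination h22' | linear_combination h12'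
      | linear_combination h1x' | linear_combination h1y'
      | linear_combination h2x' | linear_combination h2y'
  have hdetD : D.det = 1 := by
    simp [hD, Matrix.det_diagonal, Fin.prod_univ_four]
  have hdetG : (B * D * B.transpose).det =
      (pprod T1 T2)^2 - pprod T1 T1 * pprod T2 T2 := by
    rw [hG]
    simp [Matrix.det_succ_row_zero, Fin.sum_univ_succ, Fin.succAbove]
    ring
  have hdetB : B.det ≠ 0 := by
    have h1 : (B * D * B.transpose).det = B.det * D.det * B.det := by
      rw [Matrix.det_mul, Matrix.det_mul, Matrix.det_transpose]
    intro h0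
    rw [h1, h0, hdetD] at hdetG
    nlinarith [hdetG, hT]
  have hw : B.mulVec ![-(m 0), -(m 1), m 2, m 3] = 0 := by
    have hm1' := hm1; have hm2' := hm2; have hm3' := hm3; have hm4' := hm4
    simp only [pprod] at hm1' hm2' hm3' hm4'
    funext i
    fin_cases i <;>
      simp [hB, Matrix.mulVec, dotProduct, Fin.sum_univ_four, Matrix.vecHead,
        Matrix.vecTail, Function.comp] <;>
      first
      | linear_combination hm1' | linear_combination hm2'
      | linear_combination hm3' | linear_combination hm4'
  have hz := Matrix.eq_zero_of_mulVec_eq_zero hdetB hw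
  funext k
  fin_cases k
  · have := congrFun hz 0; simp at this; simpa using this
  · have := congrFun hz 1; simp at this; simpa using this
  · have := congrFun hz 2; simpa using this
  · have := congrFun hz 3; simpa using this

lemma pprod_comm (x y : Fin 4 → ℝ) : pprod x y = pprod y x := by simp [pprod]; ring
lemma pprod_add_left (x y z : Fin 4 → ℝ) : pprod (x + y) z = pprod x z + pprod y z := by
  simp [pprod]; ring
lemma pprod_sub_left (x y z : Fin 4 → ℝ) : pprod (x - y) z = pprod x z - pprod y z := by
  simp [pprod]; ring
lemma pprod_smul_left (c : ℝ) (x z : Fin 4 → ℝ) : pprod (c • x) z = c * pprod x z := by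
  simp [pprod]; ring
lemma pprod_add_right (x y z : Fin 4 → ℝ) : pprod z (x + y) = pprod z x + pprod z y := by
  simp [pprod]; ring
lemma pprod_sub_right (x y z : Fin 4 → ℝ) : pprod z (x - y) = pprod z x - pprod z y := by
  simp [pprod]; ring
lemma pprod_smul_right (c : ℝ) (x z : Fin 4 → ℝ) : pprod z (c • x) = c * pprod z x := by
  simp [pprod]; ring
lemma pprod_zero_left (z : Fin 4 → ℝ) : pprod 0 z = 0 := by simp [pprod]

def Rmap (n : Fin 4 → ℝ) : (Fin 4 → ℝ) →L[ℝ] ℝ :=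
  -(n 0) • ContinuousLinearMap.proj 0 - n 1 • ContinuousLinearMap.proj 1
    + n 2 • ContinuousLinearMap.proj 2 + n 3 • ContinuousLinearMap.proj 3

lemma Rmap_apply (n x : Fin 4 → ℝ) : Rmap n x = pprod n x := by
  simp [Rmap, pprod]; try ring

lemma fderiv_pprod_comp {X : ℝ × ℝ → Fin 4 → ℝ} {p : ℝ × ℝ}
    (hX : DifferentiableAt ℝ X p) (n : Fin 4 → ℝ) (v : ℝ × ℝ) :
    fderiv ℝ (fun q => pprod (X q) n) p v = pprod (fderiv ℝ X p v) n := by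
  have h1 : (fun q => pprod (X q) n) = fun q => Rmap n (X q) := by
    funext q; rw [Rmap_apply, pprod_comm]
  have h2 : HasFDerivAt (fun q => Rmap n (X q)) ((Rmap n).comp (fderiv ℝ X p)) p :=
    (Rmap n).hasFDerivAt.comp p hX.hasFDerivAt
  rw [h1, h2.fderiv]
  simp only [ContinuousLinearMap.coe_comp', Function.comp_apply]
  rw [Rmap_apply, pprod_comm]

lemma clm_eq_zero (φ : ℝ × ℝ →L[ℝ] ℝ) (h1 : φ (1, 0) = 0) (h2 : φ (0, 1) = 0) : φ = 0 := by
  apply ContinuousLinearMap.ext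
  intro w
  obtain ⟨x, y⟩ := w
  show φ (x, y) = 0
  have hw : (x, y) = x • ((1 : ℝ), (0 : ℝ)) + y • ((0 : ℝ), (1 : ℝ)) := by
    simp [Prod.ext_iff]
  rw [hw, map_add, map_smul, map_smul, h1, h2]
  simp

lemma const_on_connected {U : Set (ℝ × ℝ)} (hU : IsOpen U) (hpre : IsPreconnected U)
    {f : ℝ × ℝ → ℝ} (hdiff : ∀ q ∈ U, DifferentiableAt ℝ f q)
    (hder : ∀ q ∈ U, fderiv ℝ f q = 0) :
    ∀ p ∈ U, ∀ q ∈ U, f p = f q := by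
  have key : ∀ z ∈ U, ∃ ε > 0, Metric.ball z ε ⊆ U ∧ ∀ w ∈ Metric.ball z ε, f w = f z := by
    intro z hz
    obtain ⟨ε, hε, hball⟩ := Metric.isOpen_iff.1 hU z hz
    refine ⟨ε, hε, hball, fun w hw => ?_⟩
    have hco : Convex ℝ (Metric.ball z ε) := convex_ball z ε
    have hdo : DifferentiableOn ℝ f (Metric.ball z ε) := fun x hx =>
      (hdiff x (hball hx)).differentiableWithinAt
    have hder' : ∀ x ∈ Metric.ball z ε, fderivWithin ℝ f (Metric.ball z ε) x = 0 := by
      intro x hx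
      rw [fderivWithin_of_isOpen Metric.isOpen_ball hx]
      exact hder x (hball hx)
    exact hco.is_const_of_fderivWithin_eq_zero hdo hder' hw (Metric.mem_ball_self hε)
  intro p hp q hq
  by_contra hne
  set A : Set (ℝ × ℝ) := {w | w ∈ U ∧ f w = f p} with hA
  set B : Set (ℝ × ℝ) := {w | w ∈ U ∧ f w ≠ f p} with hB
  have hAopen : IsOpen A := by
    rw [Metric.isOpen_iff]
    intro z hz
    obtain ⟨ε, hε, hball, hconst⟩ := key z hz.1
    exact ⟨ε, hε, fun w hw => ⟨hball hw, by rw [hconst w hw, hz.2]⟩⟩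
  have hBopen : IsOpen B := by
    rw [Metric.isOpen_iff]
    intro z hz
    obtain ⟨ε, hε, hball, hconst⟩ := key z hz.1
    exact ⟨ε, hε, fun w hw => ⟨hball hw, by rw [hconst w hw]; exact hz.2⟩⟩
  have hcover : U ⊆ A ∪ B := by
    intro z hz
    by_cases hfz : f z = f p
    · exact Or.inl ⟨hz, hfz⟩
    · exact Or.inr ⟨hz, hfz⟩
  have hAne : (U ∩ A).Nonempty := ⟨p, hp, hp, rfl⟩
  have hBne : (U ∩ B).Nonempty := ⟨q, hq, hq, fun h => hne h.symm⟩
  obtain ⟨z, _, hzA, hzB⟩ := hpre A B hAopen hBopen hcover hAne hBne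
  exact hzB.2 hzA.2

lemma lightlike_two_pos {n : Fin 4 → ℝ} (hn : n ≠ 0) (hl : pprod n n = 0) :
    0 < n 0 ^ 2 + n 1 ^ 2 := by
  rcases lt_or_ge 0 (n 0 ^ 2 + n 1 ^ 2) with h | h
  · exact h
  · exfalso
    have h0 : n 0 = 0 := by nlinarith [sq_nonneg (n 0), sq_nonneg (n 1)]
    have h1 : n 1 = 0 := by nlinarith [sq_nonneg (n 0), sq_nonneg (n 1)]
    simp only [pprod, h0, h1] at hl
    have h2 : n 2 = 0 := by nlinarith [sq_nonneg (n 2), sq_nonneg (n 3)]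
    have h3 : n 3 = 0 := by nlinarith [sq_nonneg (n 2), sq_nonneg (n 3)]
    apply hn; funext k; fin_cases k <;> assumption

lemma decomp_lemma (T1 T2 E1 E2 : Fin 4 → ℝ)
    (hT : pprod T1 T1 * pprod T2 T2 - (pprod T1 T2)^2 < 0)
    (h11 : pprod E1 E1 = -1) (h22 : pprod E2 E2 = 1) (h12 : pprod E1 E2 = 0)
    (h1x : pprod E1 T1 = 0) (h1y : pprod E1 T2 = 0)
    (h2x : pprod E2 T1 = 0) (h2y : pprod E2 T2 = 0)
    (n : Fin 4 → ℝ) (hn1 : pprod n T1 = 0) (hn2 : pprod n T2 = 0) :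
    n = (-(pprod n E1)) • E1 + (pprod n E2) • E2 := by
  have hm := span_lemma T1 T2 E1 E2 hT h11 h22 h12 h1x h1y h2x h2y
      (n + (pprod n E1) • E1 - (pprod n E2) • E2) ?_ ?_ ?_ ?_
  · funext k
    have := congrFun hm k
    simp only [Pi.add_apply, Pi.sub_apply, Pi.smul_apply, smul_eq_mul, Pi.zero_apply,
      Pi.neg_apply, neg_mul] at this ⊢
    linarith
  · rw [pprod_sub_left, pprod_add_left, pprod_smul_left, pprod_smul_left, hn1, h1x, h2x]; ring
  · rw [pprod_sub_left, pprod_add_left, pprod_smul_left, pprod_smul_left, hn2, h1y, h2y]; ring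
  · rw [pprod_sub_left, pprod_add_left, pprod_smul_left, pprod_smul_left, h11,
      pprod_comm E2 E1, h12]; ring
  · rw [pprod_sub_left, pprod_add_left, pprod_smul_left, pprod_smul_left, h12, h22]; ring

set_option maxHeartbeats 800000 in
lemma xi_pos_of_frame (e1 e2 : ℝ × ℝ → Fin 4 → ℝ) (σ : ℝ) (hσ : σ ^ 2 = 1) (p : ℝ × ℝ)
    (h11 : pprod (e1 p) (e1 p) = -1) (h22 : pprod (e2 p) (e2 p) = 1)
    (h12 : pprod (e1 p) (e2 p) = 0) :
    0 < xi e1 e2 σ p := by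
  have h11' := h11; have h22' := h22; have h12' := h12
  simp only [pprod] at h11' h22' h12'
  unfold xi
  apply Real.sqrt_pos.mpr
  rcases lt_or_ge 0 ((e1 p 0 + σ * e2 p 0) ^ 2 + (e1 p 1 + σ * e2 p 1) ^ 2) with h | h
  · exact h
  · exfalso
    have h0 : e1 p 0 + σ * e2 p 0 = 0 := by
      nlinarith [sq_nonneg (e1 p 0 + σ * e2 p 0), sq_nonneg (e1 p 1 + σ * e2 p 1)]
    have h1 : e1 p 1 + σ * e2 p 1 = 0 := by
      nlinarith [sq_nonneg (e1 p 0 + σ * e2 p 0), sq_nonneg (e1 p 1 + σ * e2 p 1)]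
    -- w is lightlike, so the last two components also vanish
    have hww : -(e1 p 0 + σ * e2 p 0)^2 - (e1 p 1 + σ * e2 p 1)^2
        + (e1 p 2 + σ * e2 p 2)^2 + (e1 p 3 + σ * e2 p 3)^2 = 0 := by
      linear_combination h11' + 2 * σ * h12' + σ ^ 2 * h22' + hσ
    rw [h0, h1] at hww
    norm_num at hww
    have h2 : e1 p 2 + σ * e2 p 2 = 0 := by
      nlinarith [sq_nonneg (e1 p 2 + σ * e2 p 2), sq_nonneg (e1 p 3 + σ * e2 p 3), hww]
    have h3 : e1 p 3 + σ * e2 p 3 = 0 := by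
      nlinarith [sq_nonneg (e1 p 2 + σ * e2 p 2), sq_nonneg (e1 p 3 + σ * e2 p 3), hww]
    -- but pairing w with e1 gives -1
    have hwe1 : -((e1 p 0 + σ * e2 p 0) * e1 p 0) - (e1 p 1 + σ * e2 p 1) * e1 p 1
        + (e1 p 2 + σ * e2 p 2) * e1 p 2 + (e1 p 3 + σ * e2 p 3) * e1 p 3 = -1 := by
      linear_combination h11' + σ * h12'
    rw [h0, h1, h2, h3] at hwe1
    norm_num at hwe1

lemma LG_eq_of_scaling (e1 e2 : ℝ × ℝ → Fin 4 → ℝ) (σ : ℝ) (p : ℝ × ℝ) (n : Fin 4 → ℝ)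
    (μ : ℝ) (hμ : μ ≠ 0) (hn : n = μ • (e1 p + σ • e2 p))
    (hρ : Real.sqrt (n 0 ^ 2 + n 1 ^ 2) ≠ 0) :
    LG e1 e2 σ p = ((|μ| / μ) * (Real.sqrt (n 0 ^ 2 + n 1 ^ 2))⁻¹) • n := by
  have hw : e1 p + σ • e2 p = μ⁻¹ • n := by
    rw [hn]; exact (inv_smul_smul₀ hμ _).symm
  have h0 : e1 p 0 + σ * e2 p 0 = μ⁻¹ * n 0 := by
    have := congrFun hw 0
    simpa using this
  have h1 : e1 p 1 + σ * e2 p 1 = μ⁻¹ * n 1 := by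
    have := congrFun hw 1
    simpa using this
  have hxi : xi e1 e2 σ p = Real.sqrt (n 0 ^ 2 + n 1 ^ 2) * |μ|⁻¹ := by
    unfold xi
    rw [h0, h1]
    have heq : (μ⁻¹ * n 0) ^ 2 + (μ⁻¹ * n 1) ^ 2 = (n 0 ^ 2 + n 1 ^ 2) * (μ⁻¹) ^ 2 := by ring
    rw [heq, Real.sqrt_mul (by positivity), Real.sqrt_sq_eq_abs, abs_inv]
  unfold LG
  rw [hw, hxi, smul_smul]
  congr 1
  rw [mul_inv, inv_inv, div_eq_mul_inv]
  ring

lemma pp_combo (E1 E2 : Fin 4 → ℝ) (σ : ℝ) (hσ : σ ^ 2 = 1)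
    (h11 : pprod E1 E1 = -1) (h22 : pprod E2 E2 = 1) (h12 : pprod E1 E2 = 0) :
    pprod (E1 + σ • E2) (E1 + σ • E2) = 0 := by
  simp only [pprod, Pi.add_apply, Pi.smul_apply, smul_eq_mul] at *
  linear_combination h11 + 2 * σ * h12 + σ ^ 2 * h22 + hσ

lemma pp_combo_e1 (E1 E2 : Fin 4 → ℝ) (σ : ℝ)
    (h11 : pprod E1 E1 = -1) (h12 : pprod E1 E2 = 0) :
    pprod (E1 + σ • E2) E1 = -1 := by
  simp only [pprod, Pi.add_apply, Pi.smul_apply, smul_eq_mul] at *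
  linear_combination h11 + σ * h12

lemma pp_sum_sum (E1 E2 : Fin 4 → ℝ) (h11 : pprod E1 E1 = -1) (h22 : pprod E2 E2 = 1)
    (h12 : pprod E1 E2 = 0) : pprod (E1 + E2) (E1 + E2) = 0 := by
  simp only [pprod, Pi.add_apply] at *
  linear_combination h11 + h22 + 2 * h12

lemma pp_sum_diff (E1 E2 : Fin 4 → ℝ) (h11 : pprod E1 E1 = -1) (h22 : pprod E2 E2 = 1) :
    pprod (E1 + E2) (E1 - E2) = -2 := by
  simp only [pprod, Pi.add_apply, Pi.sub_apply] at *
  linear_combination h11 - h22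

lemma pp_diff_sum (E1 E2 : Fin 4 → ℝ) (h11 : pprod E1 E1 = -1) (h22 : pprod E2 E2 = 1) :
    pprod (E1 - E2) (E1 + E2) = -2 := by
  simp only [pprod, Pi.add_apply, Pi.sub_apply] at *
  linear_combination h11 - h22

lemma pp_diff_diff (E1 E2 : Fin 4 → ℝ) (h11 : pprod E1 E1 = -1) (h22 : pprod E2 E2 = 1)
    (h12 : pprod E1 E2 = 0) : pprod (E1 - E2) (E1 - E2) = 0 := by
  simp only [pprod, Pi.sub_apply] at *
  linear_combination h11 + h22 - 2 * h12

theorem stmt3 (U : Set (ℝ × ℝ)) (X e1 e2 : ℝ × ℝ → Fin 4 → ℝ)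
    (hsurf : IsLorentzSurface U X) (hframe : IsNormalFrame U X e1 e2)
    (hconn : IsConnected U) :
    (((∀ p ∈ U, ∀ q ∈ U, LG e1 e2 1 p = LG e1 e2 1 q) ∨
        (∀ p ∈ U, ∀ q ∈ U, LG e1 e2 (-1) p = LG e1 e2 (-1) q)) ↔
      (∃ n : Fin 4 → ℝ, n ≠ 0 ∧ pprod n n = 0 ∧
        ∃ c : ℝ, ∀ p ∈ U, pprod (X p) n = c)) ∧
    (∀ σ : ℝ, σ = 1 ∨ σ = -1 → ∀ v : Fin 4 → ℝ, (∀ p ∈ U, LG e1 e2 σ p = v) →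
      ∃ c : ℝ, ∀ p ∈ U, pprod (X p) v = c) ∧
    (∀ n : Fin 4 → ℝ, n ≠ 0 → pprod n n = 0 → ∀ c : ℝ, (∀ p ∈ U, pprod (X p) n = c) →
      ∀ p ∈ U, ∃ μ : ℝ, μ ≠ 0 ∧
        (n = μ • (e1 p + e2 p) ∨ n = μ • (e1 p - e2 p))) := by
  obtain ⟨hUopen, hXsmooth, hLor⟩ := hsurf
  obtain ⟨he1s, he2s, hfr⟩ := hframe
  have hXdiff : ∀ p ∈ U, DifferentiableAt ℝ X p := fun p hp =>
    (hXsmooth.differentiableOn (by simp)).differentiableAt (hUopen.mem_nhds hp)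
  -- generic constancy result
  have part2core : ∀ v : Fin 4 → ℝ,
      (∀ p ∈ U, pprod (Dx X p) v = 0 ∧ pprod (Dy X p) v = 0) →
      ∃ c : ℝ, ∀ p ∈ U, pprod (X p) v = c := by
    intro v hv
    obtain ⟨p₀, hp₀⟩ := hconn.nonempty
    have hdiff : ∀ q ∈ U, DifferentiableAt ℝ (fun q => pprod (X q) v) q := by
      intro q hq
      have h1 : (fun q => pprod (X q) v) = fun q => Rmap v (X q) := by
        funext q; rw [Rmap_apply, pprod_comm]
      rw [h1]
      exact ((Rmap v).differentiableAt).comp q (hXdiff q hq)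
    have hder : ∀ q ∈ U, fderiv ℝ (fun q => pprod (X q) v) q = 0 := by
      intro q hq
      apply clm_eq_zero
      · rw [fderiv_pprod_comp (hXdiff q hq) v (1, 0)]
        exact (hv q hq).1
      · rw [fderiv_pprod_comp (hXdiff q hq) v (0, 1)]
        exact (hv q hq).2
    exact ⟨pprod (X p₀) v, fun p hp =>
      const_on_connected hUopen hconn.isPreconnected hdiff hder p hp p₀ hp₀⟩
  -- part 2 of the statement
  have part2 : ∀ σ : ℝ, σ = 1 ∨ σ = -1 → ∀ v : Fin 4 → ℝ, (∀ p ∈ U, LG e1 e2 σ p = v) →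
      ∃ c : ℝ, ∀ p ∈ U, pprod (X p) v = c := by
    intro σ _ v hLGv
    apply part2core
    intro p hp
    obtain ⟨h11, h22, h12, h1x, h1y, h2x, h2y⟩ := hfr p hp
    have key : ∀ T : Fin 4 → ℝ, pprod (e1 p) T = 0 → pprod (e2 p) T = 0 → pprod T v = 0 := by
      intro T hT1 hT2
      rw [← hLGv p hp]
      show pprod T ((xi e1 e2 σ p)⁻¹ • (e1 p + σ • e2 p)) = 0
      rw [pprod_smul_right, pprod_add_right, pprod_smul_right,
        pprod_comm T (e1 p), hT1, pprod_comm T (e2 p), hT2]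
      ring
    exact ⟨key (Dx X p) h1x h2x, key (Dy X p) h1y h2y⟩
  -- part 3 of the statement
  have part3 : ∀ n : Fin 4 → ℝ, n ≠ 0 → pprod n n = 0 → ∀ c : ℝ,
      (∀ p ∈ U, pprod (X p) n = c) → ∀ p ∈ U, ∃ μ : ℝ, μ ≠ 0 ∧
      (n = μ • (e1 p + e2 p) ∨ n = μ • (e1 p - e2 p)) := by
    intro n hn hl c hc p hp
    obtain ⟨h11, h22, h12, h1x, h1y, h2x, h2y⟩ := hfr p hp
    have hz0 : fderiv ℝ (fun q => pprod (X q) n) p = 0 := by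
      have heq : (fun q => pprod (X q) n) =ᶠ[nhds p] fun _ => c :=
        Filter.eventuallyEq_of_mem (hUopen.mem_nhds hp) hc
      rw [heq.fderiv_eq]
      exact fderiv_const_apply c
    have hd1 : pprod n (Dx X p) = 0 := by
      rw [pprod_comm]
      have := fderiv_pprod_comp (hXdiff p hp) n (1, 0)
      rw [hz0] at this
      simpa [Dx] using this.symm
    have hd2 : pprod n (Dy X p) = 0 := by
      rw [pprod_comm]
      have := fderiv_pprod_comp (hXdiff p hp) n (0, 1)
      rw [hz0] at this
      simpa [Dy] using this.symm
    have hdec := decomp_lemma (Dx X p) (Dy X p) (e1 p) (e2 p) (hLor p hp)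
      h11 h22 h12 h1x h1y h2x h2y n hd1 hd2
    set A := pprod n (e1 p) with hA
    set Bv := pprod n (e2 p) with hBv
    have hval : pprod ((-A) • e1 p + Bv • e2 p) ((-A) • e1 p + Bv • e2 p) = Bv ^ 2 - A ^ 2 := by
      simp only [pprod_add_left, pprod_add_right, pprod_smul_left, pprod_smul_right]
      rw [h11, h22, h12, pprod_comm (e2 p) (e1 p), h12]
      ring
    have hsq : Bv ^ 2 = A ^ 2 := by
      have hl' := hl
      rw [hdec] at hl'
      rw [hval] at hl'
      linarith
    have hAne : A ≠ 0 := by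
      intro hA0
      have hB2 : Bv ^ 2 = 0 := by rw [hsq, hA0]; ring
      have hB0 : Bv = 0 := by
        have := sq_eq_zero_iff.mp hB2
        exact this
      apply hn
      rw [hdec, hA0, hB0]
      simp
    have hfac : (Bv - A) * (Bv + A) = 0 := by linear_combination hsq
    rcases mul_eq_zero.1 hfac with hcase | hcase
    · -- Bv = A : n = (-A) • (e1 p - e2 p)
      have hBA : Bv = A := by linarith
      refine ⟨-A, neg_ne_zero.mpr hAne, Or.inr ?_⟩
      rw [hdec, hBA]
      funext k
      simp only [Pi.add_apply, Pi.sub_apply, Pi.smul_apply, smul_eq_mul, neg_mul]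
      ring
    · -- Bv = -A : n = (-A) • (e1 p + e2 p)
      have hBA : Bv = -A := by linarith
      refine ⟨-A, neg_ne_zero.mpr hAne, Or.inl ?_⟩
      rw [hdec, hBA]
      funext k
      simp only [Pi.add_apply, Pi.smul_apply, smul_eq_mul, neg_mul]
      ring
  refine ⟨⟨?_, ?_⟩, part2, part3⟩
  · -- forward direction of the iff
    have main : ∀ σ : ℝ, σ = 1 ∨ σ = -1 →
        (∀ p ∈ U, ∀ q ∈ U, LG e1 e2 σ p = LG e1 e2 σ q) →
        ∃ n : Fin 4 → ℝ, n ≠ 0 ∧ pprod n n = 0 ∧ ∃ c : ℝ, ∀ p ∈ U, pprod (X p) n = c := by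
      intro σ hσor hcst
      have hσ2 : σ ^ 2 = 1 := by rcases hσor with h | h <;> rw [h] <;> norm_num
      obtain ⟨p₀, hp₀⟩ := hconn.nonempty
      obtain ⟨h11, h22, h12, _, _, _, _⟩ := hfr p₀ hp₀
      have hLGv : ∀ p ∈ U, LG e1 e2 σ p = LG e1 e2 σ p₀ := fun p hp => hcst p hp p₀ hp₀
      have hxi := xi_pos_of_frame e1 e2 σ hσ2 p₀ h11 h22 h12
      have hldef : LG e1 e2 σ p₀ = (xi e1 e2 σ p₀)⁻¹ • (e1 p₀ + σ • e2 p₀) := rfl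
      have hvv : pprod (LG e1 e2 σ p₀) (LG e1 e2 σ p₀) = 0 := by
        rw [hldef, pprod_smul_left, pprod_smul_right,
          pp_combo (e1 p₀) (e2 p₀) σ hσ2 h11 h22 h12]
        ring
      have hvn0 : LG e1 e2 σ p₀ ≠ 0 := by
        intro h0
        have h1 : pprod (LG e1 e2 σ p₀) (e1 p₀) = (xi e1 e2 σ p₀)⁻¹ * -1 := by
          rw [hldef, pprod_smul_left, pp_combo_e1 (e1 p₀) (e2 p₀) σ h11 h12]
        rw [h0, pprod_zero_left] at h1
        have hne : (xi e1 e2 σ p₀)⁻¹ ≠ 0 := inv_ne_zero (ne_of_gt hxi)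
        apply hne
        linarith
      obtain ⟨c, hcc⟩ := part2 σ hσor (LG e1 e2 σ p₀) hLGv
      exact ⟨LG e1 e2 σ p₀, hvn0, hvv, c, hcc⟩
    rintro (hcst | hcst)
    · exact main 1 (Or.inl rfl) hcst
    · exact main (-1) (Or.inr rfl) hcst
  · -- backward direction of the iff
    rintro ⟨n, hn, hl, c, hc⟩
    have hρpos : 0 < Real.sqrt (n 0 ^ 2 + n 1 ^ 2) :=
      Real.sqrt_pos.mpr (lightlike_two_pos hn hl)
    have hρ : Real.sqrt (n 0 ^ 2 + n 1 ^ 2) ≠ 0 := ne_of_gt hρpos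
    set g : ℝ × ℝ → ℝ := fun q => pprod n (e1 q + e2 q) with hgdef
    set h : ℝ × ℝ → ℝ := fun q => pprod n (e1 q - e2 q) with hhdef
    have hvals : ∀ p ∈ U,
        (∃ μ : ℝ, μ ≠ 0 ∧ n = μ • (e1 p + e2 p) ∧ g p = 0 ∧ h p = -2 * μ) ∨
        (∃ μ : ℝ, μ ≠ 0 ∧ n = μ • (e1 p - e2 p) ∧ h p = 0 ∧ g p = -2 * μ) := by
      intro p hp
      obtain ⟨h11, h22, h12, _, _, _, _⟩ := hfr p hp
      obtain ⟨μ, hμ, hcase⟩ := part3 n hn hl c hc p hp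
      rcases hcase with hcase | hcase
      · left
        refine ⟨μ, hμ, hcase, ?_, ?_⟩
        · show pprod n (e1 p + e2 p) = 0
          rw [hcase, pprod_smul_left, pp_sum_sum (e1 p) (e2 p) h11 h22 h12]
          ring
        · show pprod n (e1 p - e2 p) = -2 * μ
          rw [hcase, pprod_smul_left, pp_sum_diff (e1 p) (e2 p) h11 h22]
          ring
      · right
        refine ⟨μ, hμ, hcase, ?_, ?_⟩
        · show pprod n (e1 p - e2 p) = 0
          rw [hcase, pprod_smul_left, pp_diff_diff (e1 p) (e2 p) h11 h22 h12]
          ring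
        · show pprod n (e1 p + e2 p) = -2 * μ
          rw [hcase, pprod_smul_left, pp_diff_sum (e1 p) (e2 p) h11 h22]
          ring
    have hcontg : ContinuousOn g U := by
      have hg2 : g = fun q => Rmap n (e1 q + e2 q) := by
        funext q; rw [Rmap_apply]
      rw [hg2]
      exact (Rmap n).continuous.comp_continuousOn
        ((he1s.continuousOn).add (he2s.continuousOn))
    have hconth : ContinuousOn h U := by
      have hh2 : h = fun q => Rmap n (e1 q - e2 q) := by
        funext q; rw [Rmap_apply]
      rw [hh2]
      exact (Rmap n).continuous.comp_continuousOn
        ((he1s.continuousOn).sub (he2s.continuousOn))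
    have hglobal : (∀ q ∈ U, h q ≠ 0) ∨ (∀ q ∈ U, g q ≠ 0) := by
      by_contra hcon
      push_neg at hcon
      obtain ⟨⟨q1, hq1, hq1z⟩, ⟨q2, hq2, hq2z⟩⟩ := hcon
      set V1 : Set (ℝ × ℝ) := {q | q ∈ U ∧ h q ≠ 0} with hV1def
      set V2 : Set (ℝ × ℝ) := {q | q ∈ U ∧ g q ≠ 0} with hV2def
      have hV1open : IsOpen V1 := by
        rw [isOpen_iff_mem_nhds]
        intro z hz
        have hca : ContinuousAt h z := hconth.continuousAt (hUopen.mem_nhds hz.1)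
        filter_upwards [hUopen.mem_nhds hz.1, hca.eventually_ne hz.2] with w hw1 hw2
        exact ⟨hw1, hw2⟩
      have hV2open : IsOpen V2 := by
        rw [isOpen_iff_mem_nhds]
        intro z hz
        have hca : ContinuousAt g z := hcontg.continuousAt (hUopen.mem_nhds hz.1)
        filter_upwards [hUopen.mem_nhds hz.1, hca.eventually_ne hz.2] with w hw1 hw2
        exact ⟨hw1, hw2⟩
      have hcover : U ⊆ V1 ∪ V2 := by
        intro z hz
        rcases hvals z hz with ⟨μ, hμ, _, _, hhz⟩ | ⟨μ, hμ, _, _, hgz⟩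
        · left
          refine ⟨hz, ?_⟩
          rw [hhz]
          intro hcontr
          apply hμ
          linarith
        · right
          refine ⟨hz, ?_⟩
          rw [hgz]
          intro hcontr
          apply hμ
          linarith
      have hq2h : h q2 ≠ 0 := by
        rcases hvals q2 hq2 with ⟨μ, hμ, _, _, hhz⟩ | ⟨μ, hμ, _, _, hgz⟩
        · rw [hhz]; intro hcontr; apply hμ; linarith
        · exact absurd (by rw [hgz] at hq2z; linarith : μ = 0) hμ
      have hq1g : g q1 ≠ 0 := by
        rcases hvals q1 hq1 with ⟨μ, hμ, _, hgz, hhz⟩ | ⟨μ, hμ, _, _, hgz⟩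
        · exact absurd (by rw [hhz] at hq1z; linarith : μ = 0) hμ
        · rw [hgz]; intro hcontr; apply hμ; linarith
      have hV1ne : (U ∩ V1).Nonempty := ⟨q2, hq2, hq2, hq2h⟩
      have hV2ne : (U ∩ V2).Nonempty := ⟨q1, hq1, hq1, hq1g⟩
      obtain ⟨z, hzU, hz1, hz2⟩ :=
        hconn.isPreconnected V1 V2 hV1open hV2open hcover hV1ne hV2ne
      rcases hvals z hzU with ⟨_, _, _, hgz, _⟩ | ⟨_, _, _, hhz, _⟩
      · exact hz2.2 hgz
      · exact hz1.2 hhz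
    rcases hglobal with hplus | hminus
    · left
      have hsign : ∀ p ∈ U, ∀ q ∈ U, 0 < h p → 0 < h q := by
        intro p hp q hq hhp
        by_contra hle
        push_neg at hle
        have hlt : h q < 0 := lt_of_le_of_ne hle (hplus q hq)
        have h0mem : (0 : ℝ) ∈ Set.Icc (h q) (h p) := ⟨le_of_lt hlt, le_of_lt hhp⟩
        obtain ⟨z, hz, hz0⟩ := hconn.isPreconnected.intermediate_value hq hp hconth h0mem
        exact hplus z hz hz0
      intro p hp q hq
      obtain ⟨μp, hμp, hnp, _, hhp⟩ :
          ∃ μ : ℝ, μ ≠ 0 ∧ n = μ • (e1 p + e2 p) ∧ g p = 0 ∧ h p = -2 * μ := by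
        rcases hvals p hp with hres | ⟨_, _, _, hhz, _⟩
        · exact hres
        · exact absurd hhz (hplus p hp)
      obtain ⟨μq, hμq, hnq, _, hhq⟩ :
          ∃ μ : ℝ, μ ≠ 0 ∧ n = μ • (e1 q + e2 q) ∧ g q = 0 ∧ h q = -2 * μ := by
        rcases hvals q hq with hres | ⟨_, _, _, hhz, _⟩
        · exact hres
        · exact absurd hhz (hplus q hq)
      have hLp := LG_eq_of_scaling e1 e2 1 p n μp hμp
        (by rw [one_smul]; exact hnp) hρ
      have hLq := LG_eq_of_scaling e1 e2 1 q n μq hμq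
        (by rw [one_smul]; exact hnq) hρ
      rw [hLp, hLq]
      have hcoef : |μp| / μp = |μq| / μq := by
        rcases lt_trichotomy (h p) 0 with hlt | heq0 | hgt
        · have hqlt : h q < 0 := by
            rcases lt_trichotomy (h q) 0 with h' | h' | h'
            · exact h'
            · exact absurd h' (hplus q hq)
            · exact absurd (hsign q hq p hp h') (not_lt.mpr (le_of_lt hlt))
          have hp_pos : 0 < μp := by linarith
          have hq_pos : 0 < μq := by linarith
          rw [abs_of_pos hp_pos, abs_of_pos hq_pos, div_self (ne_of_gt hp_pos),
            div_self (ne_of_gt hq_pos)]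
        · exact absurd heq0 (hplus p hp)
        · have hqgt : 0 < h q := hsign p hp q hq hgt
          have hp_neg : μp < 0 := by linarith
          have hq_neg : μq < 0 := by linarith
          rw [abs_of_neg hp_neg, abs_of_neg hq_neg, neg_div, neg_div,
            div_self (ne_of_lt hp_neg), div_self (ne_of_lt hq_neg)]
      rw [hcoef]
    · right
      have hsign : ∀ p ∈ U, ∀ q ∈ U, 0 < g p → 0 < g q := by
        intro p hp q hq hhp
        by_contra hle
        push_neg at hle
        have hlt : g q < 0 := lt_of_le_of_ne hle (hminus q hq)
        have h0mem : (0 : ℝ) ∈ Set.Icc (g q) (g p) := ⟨le_of_lt hlt, le_of_lt hhp⟩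
        obtain ⟨z, hz, hz0⟩ := hconn.isPreconnected.intermediate_value hq hp hcontg h0mem
        exact hminus z hz hz0
      intro p hp q hq
      obtain ⟨μp, hμp, hnp, _, hhp⟩ :
          ∃ μ : ℝ, μ ≠ 0 ∧ n = μ • (e1 p - e2 p) ∧ h p = 0 ∧ g p = -2 * μ := by
        rcases hvals p hp with ⟨_, _, _, hgz, _⟩ | hres
        · exact absurd hgz (hminus p hp)
        · exact hres
      obtain ⟨μq, hμq, hnq, _, hhq⟩ :
          ∃ μ : ℝ, μ ≠ 0 ∧ n = μ • (e1 q - e2 q) ∧ h q = 0 ∧ g q = -2 * μ := by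
        rcases hvals q hq with ⟨_, _, _, hgz, _⟩ | hres
        · exact absurd hgz (hminus q hq)
        · exact hres
      have hLp := LG_eq_of_scaling e1 e2 (-1) p n μp hμp
        (by rw [neg_one_smul, ← sub_eq_add_neg]; exact hnp) hρ
      have hLq := LG_eq_of_scaling e1 e2 (-1) q n μq hμq
        (by rw [neg_one_smul, ← sub_eq_add_neg]; exact hnq) hρ
      rw [hLp, hLq]
      have hcoef : |μp| / μp = |μq| / μq := by
        rcases lt_trichotomy (g p) 0 with hlt | heq0 | hgt
        · have hqlt : g q < 0 := by
            rcases lt_trichotomy (g q) 0 with h' | h' | h'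
            · exact h'
            · exact absurd h' (hminus q hq)
            · exact absurd (hsign q hq p hp h') (not_lt.mpr (le_of_lt hlt))
          have hp_pos : 0 < μp := by linarith
          have hq_pos : 0 < μq := by linarith
          rw [abs_of_pos hp_pos, abs_of_pos hq_pos, div_self (ne_of_gt hp_pos),
            div_self (ne_of_gt hq_pos)]
        · exact absurd heq0 (hminus p hp)
        · have hqgt : 0 < g q := hsign p hp q hq hgt
          have hp_neg : μp < 0 := by linarith
          have hq_neg : μq < 0 := by linarith
          rw [abs_of_neg hp_neg, abs_of_neg hq_neg, neg_div, neg_div,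
            div_self (ne_of_lt hp_neg), div_self (ne_of_lt hq_neg)]
      rw [hcoef]
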